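/- Let A be a real n×d matrix with rows a_1,…,a_n and let 1 ≤ m ≤ n. For each subset S ⊆ {1,…,n} with |S| = m, with diagonal 0–1 indicator matrix D_S, define τ̃_i(S) := τ_i^{D_S A}(A) if i ∈ S and τ̃_i(S) := (1 + (τ_i^{D_S A}(A))⁻¹)⁻¹ otherwise (extended-real arithmetic). Then the average over all size-m subsets of the total estimated leverage is at most nd/m; that is, ∑_{S ⊆ {1,…,n}, |S| = m} ∑_{i=1}^n τ̃_i(S) ≤ C(n,m) · (n·d)/m, where C(n,m) is the binomial coefficient. -/

import Mathlib

/-!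
Write `τ^B(a)` for the generalized leverage score. For `i ∉ S`, replacing the zero row `i` of
`D_S A` by `aᵢ` gives `D_{S ∪ {i}} A`, and for any `B` a solution `x` of
`(B.updateRow i a)ᵀ x = a` with `xᵢ = c ≠ 1` has the form `x = (1 - c) z + c eᵢ` with `Bᵀ z = a`;
since `u / (1 + u) ≤ (1 - c)² u + c²`, this gives `(1 + τ^B(a)⁻¹)⁻¹ ≤ τ^{B.updateRow i a}(a)`.
So every out-of-sample estimate is bounded by an in-sample score for a sample of size `m + 1`,
and reindexing the pairs `(S, i)` by `(S ∪ {i}, i)` bounds the whole sum by in-sample scores for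
samples of sizes `m` and `m + 1`. The in-sample scores `τ^B(bᵢ)` sum to at most `d`: the
projection of `eᵢ` onto `(ker Bᵀ)ᗮ` solves `Bᵀ x = bᵢ`, and these squared norms sum to the
dimension of that subspace. It remains to check `C(n,m) d + C(n,m+1) d ≤ C(n,m) n d / m`.
-/

open Matrix
open scoped ENNReal

/-- The generalized leverage score of a row `a` with respect to `B`:
`τ^B(a) = inf {‖x‖₂² : Bᵀx = a} ∈ [0,∞]`, with `inf ∅ = ∞`. -/
noncomputable def glev {k d : ℕ} (B : Matrix (Fin k) (Fin d) ℝ) (a : Fin d → ℝ) : ℝ≥0∞ :=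
  sInf {t : ℝ≥0∞ | ∃ x : Fin k → ℝ, Bᵀ *ᵥ x = a ∧ t = ENNReal.ofReal (∑ j, (x j) ^ 2)}

/-- The diagonal 0–1 indicator matrix `D_S` of a subset `S` of row indices. -/
def ind {n : ℕ} (S : Finset (Fin n)) : Matrix (Fin n) (Fin n) ℝ :=
  Matrix.diagonal (fun j => if j ∈ S then 1 else 0)

/-- The leverage score estimate for row `i` obtained from the uniform sample `S`. -/
noncomputable def tautilde {n d : ℕ} (A : Matrix (Fin n) (Fin d) ℝ)
    (S : Finset (Fin n)) (i : Fin n) : ℝ≥0∞ :=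
  if i ∈ S then glev (ind S * A) (A i)
  else (1 + (glev (ind S * A) (A i))⁻¹)⁻¹

open scoped RealInnerProductSpace

theorem Submodule.sum_sq_norm_starProjection_eq_finrank {ι E : Type*} [Fintype ι]
    [NormedAddCommGroup E] [InnerProductSpace ℝ E] (K : Submodule ℝ E) [FiniteDimensional ℝ K]
    (b : OrthonormalBasis ι ℝ E) :
    ∑ i, ‖K.starProjection (b i)‖ ^ 2 = Module.finrank ℝ K := by
  let v := stdOrthonormalBasis ℝ K
  have hproj (x : E) : ‖K.starProjection x‖ ^ 2 = ∑ j, ⟪x, v j⟫ ^ 2 := by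
    rw [starProjection_apply, norm_coe, ← v.sum_sq_inner_right]
    simp only [inner_orthogonalProjectionOnto_eq_of_mem_left, real_inner_comm]
  simp only [hproj]
  rw [Finset.sum_comm]
  simp [b.sum_sq_inner_right, norm_coe, v.orthonormal.1]

theorem Finset.sum_powersetCard_sum_compl_insert {α M : Type*} [Fintype α] [DecidableEq α]
    [AddCommMonoid M] (m : ℕ) (f : Finset α → α → M) :
    ∑ S ∈ univ.powersetCard m, ∑ i ∈ Sᶜ, f (insert i S) i =
      ∑ T ∈ univ.powersetCard (m + 1), ∑ i ∈ T, f T i := by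
  rw [sum_sigma', sum_sigma']
  refine sum_bij' (fun p _ => ⟨insert p.2 p.1, p.2⟩) (fun p _ => ⟨p.1.erase p.2, p.2⟩)
    ?_ ?_ ?_ ?_ fun _ _ => rfl
  · rintro ⟨S, i⟩ hp
    simp only [mem_sigma, mem_powersetCard_univ, mem_compl] at hp ⊢
    exact ⟨by rw [card_insert_of_notMem hp.2, hp.1], mem_insert_self i S⟩
  · rintro ⟨T, i⟩ hp
    simp only [mem_sigma, mem_powersetCard_univ, mem_compl] at hp ⊢
    exact ⟨by rw [card_erase_of_mem hp.2, hp.1, Nat.add_sub_cancel], notMem_erase i T⟩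
  · rintro ⟨S, i⟩ hp
    simp only [mem_sigma, mem_compl] at hp
    simp [erase_insert hp.2]
  · rintro ⟨T, i⟩ hp
    simp only [mem_sigma] at hp
    simp [insert_erase hp.2]

theorem Nat.choose_add_choose_succ_mul_le (n m : ℕ) :
    (n.choose m + n.choose (m + 1)) * m ≤ n.choose m * n := by
  have hsucc := Nat.add_one_mul_choose_eq n m
  have hle : n.choose m ≤ (n + 1).choose (m + 1) :=
    Nat.choose_succ_succ' n m ▸ Nat.le_add_right _ _
  rw [← Nat.choose_succ_succ']
  nlinarith

theorem div_one_add_le_sq_mul_add_sq {u : ℝ} (hu : 0 ≤ u) (c : ℝ) :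
    u / (1 + u) ≤ (1 - c) ^ 2 * u + c ^ 2 := by
  rw [div_le_iff₀ (by positivity)]
  nlinarith [sq_nonneg (u * (1 - c) - c)]

theorem ENNReal.inv_one_add_inv_ofReal {u : ℝ} (hu : 0 ≤ u) :
    (1 + (ENNReal.ofReal u)⁻¹)⁻¹ = ENNReal.ofReal (u / (1 + u)) := by
  rcases hu.eq_or_lt with rfl | hu
  · simp
  rw [← ENNReal.ofReal_inv_of_pos hu, ← ENNReal.ofReal_one,
    ← ENNReal.ofReal_add zero_le_one (by positivity),
    ← ENNReal.ofReal_inv_of_pos (by positivity)]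
  congr 1
  field_simp
  ring

section update

variable {ι κ R : Type*} [Fintype ι] [DecidableEq ι] [CommRing R]

theorem Matrix.transpose_updateRow_mulVec (B : Matrix ι κ R) (i : ι) (a : κ → R) (x : ι → R) :
    (B.updateRow i a)ᵀ *ᵥ x = Bᵀ *ᵥ Function.update x i 0 + x i • a := by
  ext j
  simp only [mulVec, dotProduct, transpose_apply, Pi.add_apply, Pi.smul_apply, smul_eq_mul]
  rw [Fintype.sum_eq_add_sum_compl i, Fintype.sum_eq_add_sum_compl i]
  have hne (l) (hl : l ∈ ({i}ᶜ : Finset ι)) : l ≠ i := by simpa using hl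
  have hrest : ∑ l ∈ {i}ᶜ, B.updateRow i a l j * x l
      = ∑ l ∈ {i}ᶜ, B l j * Function.update x i 0 l :=
    Finset.sum_congr rfl fun l hl => by
      rw [updateRow_ne (hne l hl), Function.update_of_ne (hne l hl)]
  simp only [updateRow_self, Function.update_self, hrest]
  ring

theorem sum_sq_update_zero_add_sq (x : ι → R) (i : ι) :
    ∑ j, Function.update x i 0 j ^ 2 + x i ^ 2 = ∑ j, x j ^ 2 := by
  rw [Fintype.sum_eq_add_sum_compl i, Fintype.sum_eq_add_sum_compl i (fun j => x j ^ 2)]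
  have hne (l) (hl : l ∈ ({i}ᶜ : Finset ι)) : l ≠ i := by simpa using hl
  simp only [Function.update_self]
  rw [add_comm, zero_pow two_ne_zero, zero_add]
  congr 1
  exact Finset.sum_congr rfl fun l hl => by rw [Function.update_of_ne (hne l hl)]

end update

section glev

variable {k d : ℕ}

theorem glev_le_of_transpose_mulVec_eq {B : Matrix (Fin k) (Fin d) ℝ} {a : Fin d → ℝ}
    {x : Fin k → ℝ} (h : Bᵀ *ᵥ x = a) : glev B a ≤ ENNReal.ofReal (∑ j, x j ^ 2) :=
  sInf_le ⟨x, h, rfl⟩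

theorem sum_glev_row_le (B : Matrix (Fin k) (Fin d) ℝ) : ∑ i, glev B (B i) ≤ d := by
  let f := toLpLin 2 2 Bᵀ
  let K := (LinearMap.ker f)ᗮ
  let e := EuclideanSpace.basisFun (Fin k) ℝ
  have hrow (i : Fin k) : glev B (B i) ≤ ENNReal.ofReal (‖K.starProjection (e i)‖ ^ 2) := by
    have hker : e i - K.starProjection (e i) ∈ LinearMap.ker f := by
      simpa only [K, Submodule.orthogonal_orthogonal] using
        K.sub_starProjection_mem_orthogonal (e i)
    rw [LinearMap.mem_ker, map_sub, sub_eq_zero] at hker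
    rw [EuclideanSpace.real_norm_sq_eq]
    refine glev_le_of_transpose_mulVec_eq ?_
    simpa [f, e, toLpLin_apply, Matrix.row] using (congrArg WithLp.ofLp hker).symm
  have hK : Module.finrank ℝ K ≤ d := by
    have h1 : Module.finrank ℝ (LinearMap.ker f) + Module.finrank ℝ K = k := by
      simpa using (LinearMap.ker f).finrank_add_finrank_orthogonal
    have h2 := LinearMap.finrank_range_add_finrank_ker f
    have h3 := (LinearMap.range f).finrank_le
    simp only [finrank_euclideanSpace_fin] at h2 h3
    omega
  calc ∑ i, glev B (B i) ≤ ∑ i, ENNReal.ofReal (‖K.starProjection (e i)‖ ^ 2) :=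
        Finset.sum_le_sum fun i _ => hrow i
    _ = Module.finrank ℝ K := by
        rw [← ENNReal.ofReal_sum_of_nonneg fun i _ => by positivity,
          K.sum_sq_norm_starProjection_eq_finrank e, ENNReal.ofReal_natCast]
    _ ≤ d := by exact_mod_cast hK

theorem inv_one_add_inv_glev_le_glev_updateRow (B : Matrix (Fin k) (Fin d) ℝ) (i : Fin k)
    (a : Fin d → ℝ) :
    (1 + (glev B a)⁻¹)⁻¹ ≤ glev (B.updateRow i a) a := by
  refine le_sInf ?_
  rintro _ ⟨x, hx, rfl⟩
  set c := x i
  set y := Function.update x i 0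
  have hy : Bᵀ *ᵥ y = (1 - c) • a := by
    rw [transpose_updateRow_mulVec, ← eq_sub_iff_add_eq] at hx
    rw [hx, sub_smul, one_smul]
  rw [← sum_sq_update_zero_add_sq x i]
  by_cases hc : c = 1
  · calc (1 + (glev B a)⁻¹)⁻¹ ≤ 1 := ENNReal.inv_le_one.2 le_self_add
      _ ≤ ENNReal.ofReal (∑ j, y j ^ 2 + c ^ 2) := by
        rw [ENNReal.one_le_ofReal, hc]
        nlinarith [Finset.sum_nonneg fun j (_ : j ∈ Finset.univ) => sq_nonneg (y j)]
  · have hc' : 1 - c ≠ 0 := sub_ne_zero.2 (Ne.symm hc)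
    set z := (1 - c)⁻¹ • y
    have hz : Bᵀ *ᵥ z = a := by
      rw [mulVec_smul, hy, smul_smul, inv_mul_cancel₀ hc', one_smul]
    have hyz : ∑ j, y j ^ 2 = (1 - c) ^ 2 * ∑ j, z j ^ 2 := by
      rw [Finset.mul_sum]
      refine Finset.sum_congr rfl fun j _ => ?_
      simp only [z, Pi.smul_apply, smul_eq_mul]
      field_simp
    have hu : 0 ≤ ∑ j, z j ^ 2 := Finset.sum_nonneg fun j _ => sq_nonneg (z j)
    calc (1 + (glev B a)⁻¹)⁻¹ ≤ (1 + (ENNReal.ofReal (∑ j, z j ^ 2))⁻¹)⁻¹ := by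
          gcongr
          exact glev_le_of_transpose_mulVec_eq hz
      _ = ENNReal.ofReal ((∑ j, z j ^ 2) / (1 + ∑ j, z j ^ 2)) :=
          ENNReal.inv_one_add_inv_ofReal hu
      _ ≤ ENNReal.ofReal (∑ j, y j ^ 2 + c ^ 2) := by
          rw [hyz]
          exact ENNReal.ofReal_le_ofReal (div_one_add_le_sq_mul_add_sq hu c)

end glev

section sampling

variable {n d : ℕ} (A : Matrix (Fin n) (Fin d) ℝ)

theorem ind_mul_apply (S : Finset (Fin n)) (j : Fin n) :
    (ind S * A) j = if j ∈ S then A j else 0 := by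
  ext l
  by_cases h : j ∈ S <;> simp [ind, diagonal_mul, h]

theorem updateRow_ind_mul (S : Finset (Fin n)) (i : Fin n) :
    (ind S * A).updateRow i (A i) = ind (insert i S) * A := by
  ext j : 1
  rcases eq_or_ne j i with rfl | hj
  · simp [ind_mul_apply]
  · simp [ind_mul_apply, hj]

theorem sum_glev_ind_mul_le (S : Finset (Fin n)) :
    ∑ i ∈ S, glev (ind S * A) (A i) ≤ d :=
  calc ∑ i ∈ S, glev (ind S * A) (A i) = ∑ i ∈ S, glev (ind S * A) ((ind S * A) i) :=
        Finset.sum_congr rfl fun i hi => by rw [ind_mul_apply, if_pos hi]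
    _ ≤ ∑ i, glev (ind S * A) ((ind S * A) i) := Finset.sum_le_sum_of_subset S.subset_univ
    _ ≤ d := sum_glev_row_le _

theorem sum_powersetCard_sum_glev_ind_mul_le (m : ℕ) :
    ∑ T ∈ Finset.univ.powersetCard m, ∑ i ∈ T, glev (ind T * A) (A i) ≤ n.choose m * d := by
  simpa using Finset.sum_le_card_nsmul (Finset.univ.powersetCard m) _ _
    fun T _ => sum_glev_ind_mul_le A T

theorem sum_tautilde_le (S : Finset (Fin n)) :
    ∑ i, tautilde A S i ≤
      ∑ i ∈ S, glev (ind S * A) (A i) + ∑ i ∈ Sᶜ, glev (ind (insert i S) * A) (A i) := by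
  rw [← S.sum_add_sum_compl]
  gcongr with i hi i hi
  · rw [tautilde, if_pos hi]
  · rw [tautilde, if_neg (Finset.mem_compl.1 hi), ← updateRow_ind_mul]
    exact inv_one_add_inv_glev_le_glev_updateRow _ i (A i)

end sampling

theorem stmt7_general {n d : ℕ} (A : Matrix (Fin n) (Fin d) ℝ) (m : ℕ)
    (hm : 1 ≤ m) :
    ∑ S ∈ Finset.univ.powersetCard m, ∑ i : Fin n, tautilde A S i ≤
      (n.choose m : ℝ≥0∞) * ((n : ℝ≥0∞) * (d : ℝ≥0∞)) / (m : ℝ≥0∞) := by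
  have hchoose : (n.choose m * d + n.choose (m + 1) * d) * m ≤ n.choose m * (n * d) := by
    nlinarith [Nat.mul_le_mul_right d (Nat.choose_add_choose_succ_mul_le n m)]
  calc ∑ S ∈ Finset.univ.powersetCard m, ∑ i, tautilde A S i
      ≤ ∑ S ∈ Finset.univ.powersetCard m, (∑ i ∈ S, glev (ind S * A) (A i) +
          ∑ i ∈ Sᶜ, glev (ind (insert i S) * A) (A i)) :=
        Finset.sum_le_sum fun S _ => sum_tautilde_le A S
    _ = ∑ S ∈ Finset.univ.powersetCard m, ∑ i ∈ S, glev (ind S * A) (A i) +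
          ∑ T ∈ Finset.univ.powersetCard (m + 1), ∑ i ∈ T, glev (ind T * A) (A i) := by
        rw [Finset.sum_add_distrib,
          Finset.sum_powersetCard_sum_compl_insert m fun T i => glev (ind T * A) (A i)]
    _ ≤ n.choose m * d + n.choose (m + 1) * d :=
        add_le_add (sum_powersetCard_sum_glev_ind_mul_le A m)
          (sum_powersetCard_sum_glev_ind_mul_le A (m + 1))
    _ ≤ n.choose m * (n * d) / m := by
        rw [ENNReal.le_div_iff_mul_le (Or.inl (Nat.cast_ne_zero.2 (by omega)))
          (Or.inl (ENNReal.natCast_ne_top m))]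
        exact_mod_cast hchoose

/-- averaged over all size-`m` subsets `S` of the rows, the total
estimated leverage `∑ᵢ τ̃ᵢ(S)` is at most `nd/m`; equivalently
`∑_{|S| = m} ∑ᵢ τ̃ᵢ(S) ≤ C(n,m)·nd/m`. -/
theorem stmt7 {n d : ℕ} (A : Matrix (Fin n) (Fin d) ℝ) (m : ℕ)
    (hm : 1 ≤ m) (hmn : m ≤ n) :
    ∑ S ∈ Finset.univ.powersetCard m, ∑ i : Fin n, tautilde A S i ≤
      (n.choose m : ℝ≥0∞) * ((n : ℝ≥0∞) * (d : ℝ≥0∞)) / (m : ℝ≥0∞) :=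
  stmt7_general A m hm
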